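/- (First-order average of the main-problem Hamiltonian.) Let μ > 0, R > 0, p > 0, 0 ≤ e < 1, g ∈ ℝ, s ∈ ℝ, and set η = √(1−e²), a = p/η², r(f) = p/(1 + e·cos f). Then (1/(2π)) · ∫₀^{2π} [ −(μ/(2·r(f)))·(R²/r(f)²)·( 1 − (3/2)s² + (3/2)s²·cos(2f + 2g) ) ] · η³/(1 + e·cos f)² df = −(μ/(2a))·(R²/p²)·η·( 1 − (3/2)s² ). -/

import Mathlib

/-!
Write `u = 1 + e cos f`, so that `r = p / u`. The factor `r⁻³` of the Hamiltonian cancels the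
weight's `u⁻²`, leaving the constant `-μR²η³/(2p³)` times `u (A + B cos (2f + 2g))`, where
`A = 1 - (3/2)s²` and `B = (3/2)s²`. This is a trigonometric polynomial in `f` with constant term
`A`, so its average is `A`, and `η³/p³ = η/(a p²)` gives the stated form.
-/

open Real

theorem integral_cos_nat_mul_add_eq_zero {n : ℕ} (hn : n ≠ 0) (c : ℝ) :
    ∫ x in (0 : ℝ)..2 * π, cos (n * x + c) = 0 := by
  rw [intervalIntegral.integral_comp_mul_add (fun x => cos x) (Nat.cast_ne_zero.2 hn), integral_cos,
    mul_zero, zero_add, add_comm, sin_add_nat_mul_two_pi, sub_self, smul_zero]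

-- Each harmonic is written as `cos (n * x + c)` with `n : ℕ`, the shape of
-- `integral_cos_nat_mul_add_eq_zero`.
theorem one_add_mul_cos_mul_eq (e A B x c : ℝ) :
    (1 + e * cos x) * (A + B * cos (2 * x + c))
      = A + A * e * cos ((1 : ℕ) * x + 0) + B * cos ((2 : ℕ) * x + c)
        + B * e / 2 * cos ((3 : ℕ) * x + c) + B * e / 2 * cos ((1 : ℕ) * x + c) := by
  have h3 : cos (3 * x + c) = cos (2 * x + c) * cos x - sin (2 * x + c) * sin x := by
    rw [← cos_add]; ring_nf
  have h1 : cos (x + c) = cos (2 * x + c) * cos x + sin (2 * x + c) * sin x := by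
    rw [← cos_sub]; ring_nf
  push_cast
  rw [one_mul, add_zero, h3, h1]
  ring

theorem integral_one_add_mul_cos_mul_eq (e A B c : ℝ) :
    ∫ x in (0 : ℝ)..2 * π, (1 + e * cos x) * (A + B * cos (2 * x + c)) = 2 * π * A := by
  simp only [one_add_mul_cos_mul_eq]
  rw [intervalIntegral.integral_add, intervalIntegral.integral_add, intervalIntegral.integral_add,
    intervalIntegral.integral_add]
  · simp only [intervalIntegral.integral_const_mul, intervalIntegral.integral_const,
      integral_cos_nat_mul_add_eq_zero one_ne_zero, integral_cos_nat_mul_add_eq_zero two_ne_zero,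
      integral_cos_nat_mul_add_eq_zero three_ne_zero]
    simp only [sub_zero, smul_eq_mul, mul_zero, add_zero]
  all_goals exact Continuous.intervalIntegrable (by fun_prop) _ _

theorem one_add_mul_cos_pos {e : ℝ} (he : |e| < 1) (x : ℝ) : 0 < 1 + e * cos x := by
  have hle : |e * cos x| ≤ |e| := by
    rw [abs_mul]; exact mul_le_of_le_one_right (abs_nonneg e) (abs_cos_le_one x)
  linarith [neg_abs_le (e * cos x)]

theorem hamiltonian_mul_weight_eq (μ R p η u X : ℝ) (hp : p ≠ 0) (hu : u ≠ 0) :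
    -(μ / (2 * (p / u))) * (R ^ 2 / (p / u) ^ 2) * X * (η ^ 3 / u ^ 2)
      = -(μ * R ^ 2 * η ^ 3 / (2 * p ^ 3)) * (u * X) := by
  field_simp

theorem main_problem_first_order_average_general
    (μ R p e η a : ℝ) (g s : ℝ)
    (hp : 0 < p)
    (he0 : 0 ≤ e) (he1 : e < 1)
    (ha : a = p / η ^ 2)
    (r : ℝ → ℝ)
    (hr : ∀ f : ℝ, r f = p / (1 + e * Real.cos f)) :
    (1 / (2 * Real.pi)) *
      ∫ f in (0 : ℝ)..(2 * Real.pi),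
        (-(μ / (2 * r f)) * (R ^ 2 / (r f) ^ 2) *
          (1 - 3 / 2 * s ^ 2 + 3 / 2 * s ^ 2 * Real.cos (2 * f + 2 * g))) *
        (η ^ 3 / (1 + e * Real.cos f) ^ 2)
    = -(μ / (2 * a)) * (R ^ 2 / p ^ 2) * η * (1 - 3 / 2 * s ^ 2) := by
  have hu f : 1 + e * cos f ≠ 0 := (one_add_mul_cos_pos (abs_lt.2 ⟨by linarith, he1⟩) f).ne'
  simp only [hr, hamiltonian_mul_weight_eq _ _ _ _ _ _ hp.ne' (hu _)]
  rw [intervalIntegral.integral_const_mul, integral_one_add_mul_cos_mul_eq,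
    show 2 * a = 2 * p / η ^ 2 by rw [ha, mul_div_assoc], div_div_eq_mul_div]
  field_simp

/-- (First-order average of the main-problem Hamiltonian.)
With `μ, R, p > 0`, `0 ≤ e < 1`, `η = √(1−e²)`, `a = p/η²`, `r f = p/(1+e cos f)`,
the mean-anomaly average of
`−(μ/(2r))(R²/r²)(1 − (3/2)s² + (3/2)s² cos(2f+2g))`
equals `−(μ/(2a))(R²/p²) η (1 − (3/2)s²)`. -/
theorem main_problem_first_order_average
    (μ R p e η a : ℝ) (g s : ℝ)
    (hμ : 0 < μ) (hR : 0 < R) (hp : 0 < p)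
    (he0 : 0 ≤ e) (he1 : e < 1)
    (hη : η = Real.sqrt (1 - e ^ 2))
    (ha : a = p / η ^ 2)
    (r : ℝ → ℝ)
    (hr : ∀ f : ℝ, r f = p / (1 + e * Real.cos f)) :
    (1 / (2 * Real.pi)) *
      ∫ f in (0 : ℝ)..(2 * Real.pi),
        (-(μ / (2 * r f)) * (R ^ 2 / (r f) ^ 2) *
          (1 - 3 / 2 * s ^ 2 + 3 / 2 * s ^ 2 * Real.cos (2 * f + 2 * g))) *
        (η ^ 3 / (1 + e * Real.cos f) ^ 2)
    = -(μ / (2 * a)) * (R ^ 2 / p ^ 2) * η * (1 - 3 / 2 * s ^ 2) :=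
  main_problem_first_order_average_general μ R p e η a g s hp he0 he1 ha r hr
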